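/- arXiv:1711.04381 — 4 statements merged into one kernel-verified Lean document; each statement's English description precedes it below -/
import Mathlib

section
/- Let n ≥ 3 and k ≥ 0 be integers, let 0 < ε < 1, and let σ, a, b be real numbers with b ≠ 0. Define α : (0, ∞) → ℝ by α(ρ) = a ρ^k + b ρ^{2−n−k}. If α′(1) = σ α(1) and α′(ε) = −σ α(ε), then (ε − ε^{2k+n−1}) σ² − ((k+n−2) ε^{2k+n−1} + k ε^{2k+n−2} + k ε + (k+n−2)) σ + k(k+n−2)(1 − ε^{2k+n−2}) = 0. -/
/-!
Writing `α(ρ) = a ρ^p + b ρ^q` with `p = k`, `q = 2 - n - k`, both boundary conditions are linear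
in `(a, b)`. Since `b ≠ 0`, this linear system has a nontrivial solution, so its determinant
vanishes; dividing by `ε^q` and expanding gives the quadratic equation in `σ`.
-/

theorem mul_sub_mul_eq_zero_of_add_mul_eq_zero {R : Type*} [CommRing R] [NoZeroDivisors R]
    {x y u v w z : R} (h₁ : x * u + y * v = 0) (h₂ : x * w + y * z = 0) (hy : y ≠ 0) :
    u * z - v * w = 0 := by
  have : y * (u * z - v * w) = 0 := by linear_combination u * h₂ - w * h₁
  exact (mul_eq_zero.mp this).resolve_left hy

theorem mul_deriv_eq_of_eq_mul_zpow_add_mul_zpow {f : ℝ → ℝ} {a b : ℝ} {p q : ℤ}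
    (hf : ∀ ρ : ℝ, 0 < ρ → f ρ = a * ρ ^ p + b * ρ ^ q) {ρ : ℝ} (hρ : 0 < ρ) :
    ρ * deriv f ρ = p * a * ρ ^ p + q * b * ρ ^ q := by
  have hderiv : HasDerivAt f
      (a * (p * ρ ^ (p - 1)) + b * (q * ρ ^ (q - 1))) ρ := by
    refine (((hasDerivAt_zpow p ρ (Or.inl hρ.ne')).const_mul a).add
      ((hasDerivAt_zpow q ρ (Or.inl hρ.ne')).const_mul b)).congr_of_eventuallyEq ?_
    filter_upwards [Ioi_mem_nhds hρ] with y hy using hf y hy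
  rw [hderiv.deriv, zpow_sub_one₀ hρ.ne', zpow_sub_one₀ hρ.ne']
  field_simp

theorem steklov_annulus_det {f : ℝ → ℝ} {a b σ ε : ℝ} {p q : ℤ} (hb : b ≠ 0) (hε : 0 < ε)
    (hf : ∀ ρ : ℝ, 0 < ρ → f ρ = a * ρ ^ p + b * ρ ^ q)
    (h₁ : deriv f 1 = σ * f 1) (hε' : deriv f ε = -σ * f ε) :
    (p - σ) * (q + σ * ε) = (q - σ) * ε ^ (p - q) * (p + σ * ε) := by
  have outer : a * (p - σ) + b * (q - σ) = 0 := by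
    have := mul_deriv_eq_of_eq_mul_zpow_add_mul_zpow hf one_pos
    rw [h₁, hf 1 one_pos] at this
    simp only [one_zpow, one_mul, mul_one] at this
    linear_combination -this
  have inner : a * (ε ^ p * (p + σ * ε)) + b * (ε ^ q * (q + σ * ε)) = 0 := by
    have := mul_deriv_eq_of_eq_mul_zpow_add_mul_zpow hf hε
    rw [hε', hf ε hε] at this
    linear_combination -this
  have hdet := mul_sub_mul_eq_zero_of_add_mul_eq_zero outer inner hb
  have hsplit : ε ^ p = ε ^ (p - q) * ε ^ q := by
    rw [← zpow_add₀ hε.ne', sub_add_cancel]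
  rw [hsplit] at hdet
  refine mul_right_cancel₀ (zpow_ne_zero q hε.ne') ?_
  linear_combination hdet

theorem stmt4_general {n k : ℕ} (hn : 3 ≤ n) (ε σ a b : ℝ) (hε : 0 < ε)
    (hb : b ≠ 0) (α : ℝ → ℝ)
    (hα : ∀ ρ : ℝ, 0 < ρ → α ρ = a * ρ ^ (k : ℤ) + b * ρ ^ ((2 : ℤ) - n - k))
    (h1 : deriv α 1 = σ * α 1)
    (h2 : deriv α ε = -σ * α ε) :
    (ε - ε ^ (2 * k + n - 1)) * σ ^ 2
      - (((k : ℝ) + n - 2) * ε ^ (2 * k + n - 1) + (k : ℝ) * ε ^ (2 * k + n - 2)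
          + (k : ℝ) * ε + ((k : ℝ) + n - 2)) * σ
      + (k : ℝ) * ((k : ℝ) + n - 2) * (1 - ε ^ (2 * k + n - 2)) = 0 := by
  have hdet := steklov_annulus_det hb hε hα h1 h2
  have hexp : (k : ℤ) - (2 - n - k) = ((2 * k + n - 2 : ℕ) : ℤ) := by omega
  have hpow : ε ^ (2 * k + n - 1) = ε * ε ^ (2 * k + n - 2) := by
    rw [← pow_succ']
    congr 1
    omega
  rw [hexp, zpow_natCast] at hdet
  push_cast at hdet
  rw [hpow]
  linear_combination -hdet

/-- The Steklov boundary conditions on the annulus `{ε < ‖x‖ < 1} ⊆ ℝⁿ` for the radial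
function `α(ρ) = a ρ^k + b ρ^{2-n-k}` force `σ` to satisfy the quadratic equation
`(ε - ε^{2k+n-1}) σ² - ((k+n-2) ε^{2k+n-1} + k ε^{2k+n-2} + k ε + (k+n-2)) σ
  + k (k+n-2) (1 - ε^{2k+n-2}) = 0`. -/
theorem stmt4 {n k : ℕ} (hn : 3 ≤ n) (ε σ a b : ℝ) (hε : 0 < ε) (hε1 : ε < 1)
    (hb : b ≠ 0) (α : ℝ → ℝ)
    (hα : ∀ ρ : ℝ, 0 < ρ → α ρ = a * ρ ^ (k : ℤ) + b * ρ ^ ((2 : ℤ) - n - k))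
    (h1 : deriv α 1 = σ * α 1)
    (h2 : deriv α ε = -σ * α ε) :
    (ε - ε ^ (2 * k + n - 1)) * σ ^ 2
      - (((k : ℝ) + n - 2) * ε ^ (2 * k + n - 1) + (k : ℝ) * ε ^ (2 * k + n - 2)
          + (k : ℝ) * ε + ((k : ℝ) + n - 2)) * σ
      + (k : ℝ) * ((k : ℝ) + n - 2) * (1 - ε ^ (2 * k + n - 2)) = 0 :=
  stmt4_general hn ε σ a b hε hb α hα h1 h2
end

section
/- Let n ≥ 3 and k ≥ 1 be integers and define, for 0 < ε < 1, A(ε) = ε − ε^{2k+n−1}, B(ε) = −((k+n−2)ε^{2k+n−1} + kε^{2k+n−2} + kε + (k+n−2)), C(ε) = k(k+n−2)(1 − ε^{2k+n−2}). Then there exist ε₀ ∈ (0,1) and M > 0 such that for all ε ∈ (0, ε₀): B(ε)² − 4A(ε)C(ε) > 0, and the smaller root σ₋(ε) := (−B(ε) − √(B(ε)² − 4A(ε)C(ε)))/(2A(ε)) of the quadratic A(ε)σ² + B(ε)σ + C(ε) = 0 satisfies |σ₋(ε) − k + (k(2k+n−2)/(k+n−2)) ε^{2k+n−2}| ≤ M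 ε^{2k+n−1}. -/
/-- Coefficient `A(ε)` of the annulus Steklov quadratic. -/
def annA (n k : ℕ) (ε : ℝ) : ℝ := ε - ε ^ (2 * k + n - 1)

/-- Coefficient `B(ε)` of the annulus Steklov quadratic. -/
def annB (n k : ℕ) (ε : ℝ) : ℝ :=
  -(((k : ℝ) + n - 2) * ε ^ (2 * k + n - 1) + (k : ℝ) * ε ^ (2 * k + n - 2)
      + (k : ℝ) * ε + ((k : ℝ) + n - 2))

/-- Coefficient `C(ε)` of the annulus Steklov quadratic. -/
def annC (n k : ℕ) (ε : ℝ) : ℝ := (k : ℝ) * ((k : ℝ) + n - 2) * (1 - ε ^ (2 * k + n - 2))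

/-- The smaller root `σ₋(ε)` of the quadratic `A(ε)σ² + B(ε)σ + C(ε) = 0`. -/
noncomputable def sigMinus (n k : ℕ) (ε : ℝ) : ℝ :=
  (-(annB n k ε) - Real.sqrt ((annB n k ε) ^ 2 - 4 * annA n k ε * annC n k ε)) /
    (2 * annA n k ε)

private lemma stmt5_aux_p {K Q R c M ε E : ℝ} (hK : 1 ≤ K) (hQ : K + 1 ≤ Q)
    (hR : R = K + Q) (hc0 : 0 < c) (hcR : c ≤ R) (hM : M = 2 * R ^ 2 + 2)
    (hε0 : 0 < ε) (hεhalf : ε ≤ 1 / 2) (hεs : ε * (M + 4 * R) ≤ 1)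
    (hE0 : 0 < E) (hE1 : E < 1) (hE3 : E ≤ ε ^ 3) :
    ε * E * (-(K * R) - K * c - Q * M + K * M * ε)
      + E ^ 2 * (-(((2 * K + Q) * ε + K) * (M * ε - c)) + ε * (1 - E) * (M * ε - c) ^ 2)
      < 0 := by
  have hR0 : 0 < R := by linarith
  have hM0 : 0 < M := by linarith [sq_nonneg R]
  have hε1 : ε ≤ 1 := by linarith
  have hKR : K ≤ R := by linarith
  have hXp : -(K * R) - K * c - Q * M + K * M * ε ≤ -M := by
    have a1 : K * M * ε ≤ K * M * 1 :=
      mul_le_mul_of_nonneg_left hε1 (mul_nonneg (by linarith) hM0.le)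
    have a2 : (K + 1) * M ≤ Q * M := mul_le_mul_of_nonneg_right hQ hM0.le
    have a3 : 0 ≤ K * R := mul_nonneg (by linarith) hR0.le
    have a4 : 0 ≤ K * c := mul_nonneg (by linarith) hc0.le
    linarith
  have hMε0 : 0 ≤ M * ε := mul_nonneg hM0.le hε0.le
  have hMε : M * ε ≤ M := by
    have := mul_le_mul_of_nonneg_left hε1 hM0.le
    linarith
  have hu0 : 0 ≤ (2 * K + Q) * ε + K := by
    have := mul_nonneg (show (0:ℝ) ≤ 2 * K + Q by linarith) hε0.le
    linarith
  have hu3R : (2 * K + Q) * ε + K ≤ 3 * R := by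
    have := mul_le_mul_of_nonneg_left hε1 (show (0:ℝ) ≤ 2 * K + Q by linarith)
    linarith
  have h1 : (M * ε - c) ^ 2 ≤ (M + R) ^ 2 :=
    sq_le_sq' (by linarith) (by linarith)
  have h2 : -(((2 * K + Q) * ε + K) * (M * ε - c)) ≤ 3 * R * R := by
    have b1 : ((2 * K + Q) * ε + K) * (c - M * ε) ≤ ((2 * K + Q) * ε + K) * c :=
      mul_le_mul_of_nonneg_left (by linarith) hu0
    have b2 : ((2 * K + Q) * ε + K) * c ≤ 3 * R * R :=
      mul_le_mul hu3R hcR hc0.le (by linarith)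
    linarith [b1, b2]
  have h3 : 0 ≤ ε * (1 - E) := mul_nonneg hε0.le (by linarith)
  have h4 : ε * (1 - E) ≤ 1 := by
    have := mul_le_mul_of_nonneg_left (show 1 - E ≤ 1 by linarith) hε0.le
    linarith
  have h5 : ε * (1 - E) * (M * ε - c) ^ 2 ≤ 1 * (M + R) ^ 2 :=
    mul_le_mul h4 h1 (sq_nonneg _) (by norm_num)
  have hGp : -(((2 * K + Q) * ε + K) * (M * ε - c)) + ε * (1 - E) * (M * ε - c) ^ 2
      ≤ (M + 4 * R) ^ 2 := by
    linarith [mul_nonneg hM0.le hR0.le, sq_nonneg R, h2, h5]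
  have hE2 : E ^ 2 ≤ E * ε * ε ^ 2 := by
    have := mul_le_mul_of_nonneg_left hE3 hE0.le
    linarith [this]
  have hεsq : ε ^ 2 * (M + 4 * R) ^ 2 ≤ 1 := by
    have q := mul_le_mul hεs hεs (mul_nonneg hε0.le (by linarith)) (by norm_num)
    linarith [q]
  have hεE : 0 < ε * E := mul_pos hε0 hE0
  have t1 : ε * E * (-(K * R) - K * c - Q * M + K * M * ε) ≤ ε * E * (-M) :=
    mul_le_mul_of_nonneg_left hXp hεE.le
  have t2 : E ^ 2 * (-(((2 * K + Q) * ε + K) * (M * ε - c)) + ε * (1 - E) * (M * ε - c) ^ 2)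
      ≤ E * ε * (ε ^ 2 * (M + 4 * R) ^ 2) := by
    calc E ^ 2 * (-(((2 * K + Q) * ε + K) * (M * ε - c)) + ε * (1 - E) * (M * ε - c) ^ 2)
        ≤ E ^ 2 * (M + 4 * R) ^ 2 :=
          mul_le_mul_of_nonneg_left hGp (sq_nonneg E)
      _ ≤ (E * ε * ε ^ 2) * (M + 4 * R) ^ 2 :=
          mul_le_mul_of_nonneg_right hE2 (sq_nonneg _)
      _ = E * ε * (ε ^ 2 * (M + 4 * R) ^ 2) := by ring
  have t3 : E * ε * (ε ^ 2 * (M + 4 * R) ^ 2) ≤ E * ε * 1 :=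
    mul_le_mul_of_nonneg_left hεsq (by positivity)
  have t4 : ε * E * (-M) ≤ ε * E * (-2) :=
    mul_le_mul_of_nonneg_left (by linarith [sq_nonneg R]) hεE.le
  linarith [t1, t2, t3, t4, hεE]

private lemma stmt5_aux_m {K Q R c M ε E : ℝ} (hK : 1 ≤ K) (hQ : K + 1 ≤ Q)
    (hR : R = K + Q) (hc0 : 0 < c) (hcR : c ≤ R) (hM : M = 2 * R ^ 2 + 2)
    (hε0 : 0 < ε) (hεhalf : ε ≤ 1 / 2)
    (hE0 : 0 < E) (hE1 : E < 1) :
    0 < ε * E * (-(K * R) - K * c + Q * M - K * M * ε)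
      + E ^ 2 * (((2 * K + Q) * ε + K) * (c + M * ε) + ε * (1 - E) * (c + M * ε) ^ 2) := by
  have hR0 : 0 < R := by linarith
  have hM0 : 0 < M := by linarith [sq_nonneg R]
  have hε1 : ε ≤ 1 := by linarith
  have hKR : K ≤ R := by linarith
  have hXm : 2 ≤ -(K * R) - K * c + Q * M - K * M * ε := by
    have a1 : 0 ≤ K * M * ε := mul_nonneg (mul_nonneg (by linarith) hM0.le) hε0.le
    have a2 : K * M * ε ≤ K * M * 1 :=
      mul_le_mul_of_nonneg_left hε1 (mul_nonneg (by linarith) hM0.le)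
    have a2' : (K + 1) * M ≤ Q * M := mul_le_mul_of_nonneg_right hQ hM0.le
    have a3 : K * R ≤ R * R := mul_le_mul_of_nonneg_right hKR hR0.le
    have a4 : K * c ≤ R * R := mul_le_mul hKR hcR hc0.le hR0.le
    linarith [a1, a2, a2', a3, a4, sq_nonneg R]
  have hu0 : 0 ≤ (2 * K + Q) * ε + K := by
    have := mul_nonneg (show (0:ℝ) ≤ 2 * K + Q by linarith) hε0.le
    linarith
  have hGm : 0 ≤ ((2 * K + Q) * ε + K) * (c + M * ε) + ε * (1 - E) * (c + M * ε) ^ 2 := by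
    have g1 : 0 ≤ ((2 * K + Q) * ε + K) * (c + M * ε) :=
      mul_nonneg hu0 (by linarith [mul_nonneg hM0.le hε0.le])
    have g2 : 0 ≤ ε * (1 - E) * (c + M * ε) ^ 2 :=
      mul_nonneg (mul_nonneg hε0.le (by linarith)) (sq_nonneg _)
    linarith
  have hεE : 0 < ε * E := mul_pos hε0 hE0
  have t1 : ε * E * 2 ≤ ε * E * (-(K * R) - K * c + Q * M - K * M * ε) :=
    mul_le_mul_of_nonneg_left hXm hεE.le
  have t2 : 0 ≤ E ^ 2 * (((2 * K + Q) * ε + K) * (c + M * ε) + ε * (1 - E) * (c + M * ε) ^ 2) :=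
    mul_nonneg (sq_nonneg E) hGm
  linarith [t1, t2, hεE]

private lemma stmt5_aux_v {K Q c M ε E : ℝ} (hK : 1 ≤ K) (hQ : K + 1 ≤ Q)
    (hc0 : 0 < c) (hM0 : 0 < M)
    (hε0 : 0 < ε) (hεhalf : ε ≤ 1 / 2) (hE0 : 0 < E) (hE1 : E < 1) :
    2 * (ε - E * ε) * (K - c * E - M * (ε * E)) + -(Q * (E * ε) + K * E + K * ε + Q) < 0 := by
  have h1 : 0 ≤ (ε - E * ε) * (c * E + M * (ε * E)) := by
    have h0 : 0 ≤ ε - E * ε := by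
      linarith [mul_nonneg hε0.le (show (0:ℝ) ≤ 1 - E by linarith), show ε * (1 - E) = ε - E * ε from by ring]
    have h0' : 0 ≤ c * E + M * (ε * E) :=
      add_nonneg (mul_nonneg hc0.le hE0.le) (mul_nonneg hM0.le (mul_nonneg hε0.le hE0.le))
    exact mul_nonneg h0 h0'
  have f1 : 0 ≤ E * ε * K := mul_nonneg (mul_nonneg hE0.le hε0.le) (by linarith)
  have f2 : ε * K ≤ (1 / 2) * K := mul_le_mul_of_nonneg_right hεhalf (by linarith)
  have f3 : 0 ≤ Q * (E * ε) := mul_nonneg (by linarith) (mul_nonneg hE0.le hε0.le)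
  have f4 : 0 ≤ K * E := mul_nonneg (by linarith) hE0.le
  have f5 : 0 ≤ K * ε := mul_nonneg (by linarith) hε0.le
  linarith [h1, f1, f2, f3, f4, f5,
    show 2 * (ε - E * ε) * (K - c * E - M * (ε * E)) = 2 * ε * K - 2 * (E * ε * K) - 2 * ((ε - E * ε) * (c * E + M * (ε * E))) from by ring]

/-- Asymptotics of the smaller root: the discriminant is positive and
`σ₋(ε) = k - (k(2k+n-2)/(k+n-2)) ε^{2k+n-2} + O(ε^{2k+n-1})`. -/
theorem stmt5 {n k : ℕ} (hn : 3 ≤ n) (hk : 1 ≤ k) :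
    ∃ ε₀ ∈ Set.Ioo (0 : ℝ) 1, ∃ M > (0 : ℝ), ∀ ε ∈ Set.Ioo (0 : ℝ) ε₀,
      0 < (annB n k ε) ^ 2 - 4 * annA n k ε * annC n k ε ∧
      |sigMinus n k ε - (k : ℝ)
          + ((k : ℝ) * (2 * (k : ℝ) + n - 2) / ((k : ℝ) + n - 2)) * ε ^ (2 * k + n - 2)|
        ≤ M * ε ^ (2 * k + n - 1) := by
  have hK : (1:ℝ) ≤ (k:ℝ) := by exact_mod_cast hk
  have hN : (3:ℝ) ≤ (n:ℝ) := by exact_mod_cast hn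
  set K : ℝ := (k:ℝ) with hKdef
  set Q : ℝ := K + (n:ℝ) - 2 with hQdef
  have hQ : K + 1 ≤ Q := by rw [hQdef]; linarith
  have hQ0 : 0 < Q := by linarith
  set R : ℝ := K + Q with hRdef
  have hR3 : (3:ℝ) ≤ R := by rw [hRdef]; linarith
  have hR0 : (0:ℝ) < R := by linarith
  set c : ℝ := K * R / Q with hcdef
  have hc0 : 0 < c := by rw [hcdef]; positivity
  have hcR : c ≤ R := by
    rw [hcdef, div_le_iff₀ hQ0]; nlinarith
  set M : ℝ := 2 * R ^ 2 + 2 with hMdef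
  have hQc : Q * c = K * (K + Q) := by rw [hcdef, hRdef]; field_simp
  have hc'' : K * (2 * K + (n:ℝ) - 2) / Q = c := by
    rw [hcdef, hRdef, hQdef]; ring
  clear_value K Q R c M
  have hM0 : (0:ℝ) < M := by nlinarith [sq_nonneg R]
  have hMR : (0:ℝ) < M + 4 * R := by linarith
  set ε₀ : ℝ := min (1/2) (1 / (M + 4 * R)) with hε₀def
  have hε₀0 : 0 < ε₀ := lt_min (by norm_num) (by positivity)
  have hε₀1 : ε₀ < 1 := lt_of_le_of_lt (min_le_left _ _) (by norm_num)
  refine ⟨ε₀, ⟨hε₀0, hε₀1⟩, M, by linarith, ?_⟩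
  rintro ε ⟨hε0, hεlt⟩
  have hεhalf : ε ≤ 1/2 := le_trans hεlt.le (min_le_left _ _)
  have hεs : ε * (M + 4 * R) ≤ 1 := by
    have h := le_trans hεlt.le (min_le_right (1/2) (1 / (M + 4 * R)))
    rw [le_div_iff₀ hMR] at h; linarith
  have hε1 : ε < 1 := by linarith
  clear hεlt
  clear_value ε₀
  -- exponents
  have hexp : 2 * k + n - 1 = (2 * k + n - 2) + 1 := by omega
  set E : ℝ := ε ^ (2 * k + n - 2) with hEdef
  have hE1' : ε ^ (2 * k + n - 1) = E * ε := by rw [hexp, pow_succ, hEdef]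
  have hEpos : 0 < E := pow_pos hε0 _
  have hElt1 : E < 1 := pow_lt_one₀ hε0.le hε1 (by omega)
  have hE3 : E ≤ ε ^ 3 := pow_le_pow_of_le_one hε0.le hε1.le (by omega)
  have hA : annA n k ε = ε - E * ε := by rw [annA, hE1', hEdef]
  have hB : annB n k ε = -(Q * (E * ε) + K * E + K * ε + Q) := by
    rw [annB, hE1', hEdef, hQdef, hKdef]
  have hC : annC n k ε = K * Q * (1 - E) := by
    rw [annC, hEdef, hQdef, hKdef]
  clear_value E
  have hA0 : 0 < annA n k ε := by
    rw [hA]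
    have h := mul_pos hε0 (show (0:ℝ) < 1 - E by linarith)
    linarith [show ε * (1 - E) = ε - E * ε from by ring]
  set tp : ℝ := K - c * E + M * (ε * E) with htpdef
  set tm : ℝ := K - c * E - M * (ε * E) with htmdef
  clear_value tp tm
  -- signs of the quadratic at tp and tm, and the vertex condition
  have hp1 := stmt5_aux_p hK hQ hRdef hc0 hcR hMdef hε0 hεhalf hεs hEpos hElt1 hE3
  have hm1 := stmt5_aux_m hK hQ hRdef hc0 hcR hMdef hε0 hεhalf hEpos hElt1
  have hvert : 2 * annA n k ε * tm + annB n k ε < 0 := by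
    rw [hA, hB, htmdef]
    exact stmt5_aux_v hK hQ hc0 hM0 hε0 hεhalf hEpos hElt1
  have hfp : annA n k ε * tp ^ 2 + annB n k ε * tp + annC n k ε
      = ε * E * (-(K * R) - K * c - Q * M + K * M * ε)
        + E ^ 2 * (-(((2 * K + Q) * ε + K) * (M * ε - c)) + ε * (1 - E) * (M * ε - c) ^ 2) := by
    rw [hA, hB, hC, htpdef, hRdef]
    linear_combination E * hQc
  have hfm : annA n k ε * tm ^ 2 + annB n k ε * tm + annC n k ε
      = ε * E * (-(K * R) - K * c + Q * M - K * M * ε)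
        + E ^ 2 * (((2 * K + Q) * ε + K) * (c + M * ε) + ε * (1 - E) * (c + M * ε) ^ 2) := by
    rw [hA, hB, hC, htmdef, hRdef]
    linear_combination E * hQc
  have hfp_neg : annA n k ε * tp ^ 2 + annB n k ε * tp + annC n k ε < 0 := by
    rw [hfp]; exact hp1
  have hfm_pos : 0 < annA n k ε * tm ^ 2 + annB n k ε * tm + annC n k ε := by
    rw [hfm]; exact hm1
  clear hfp hfm hp1 hm1
  -- discriminant
  have hidenp : (2 * annA n k ε * tp + annB n k ε) ^ 2
      - (annB n k ε ^ 2 - 4 * annA n k ε * annC n k ε)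
      = 4 * annA n k ε * (annA n k ε * tp ^ 2 + annB n k ε * tp + annC n k ε) := by ring
  have h4p : 4 * annA n k ε * (annA n k ε * tp ^ 2 + annB n k ε * tp + annC n k ε) < 0 := by
    have h := mul_pos hA0 (neg_pos.mpr hfp_neg)
    linarith [h, show annA n k ε * -(annA n k ε * tp ^ 2 + annB n k ε * tp + annC n k ε) = -(annA n k ε * (annA n k ε * tp ^ 2 + annB n k ε * tp + annC n k ε)) from by ring]
  have hD : 0 < annB n k ε ^ 2 - 4 * annA n k ε * annC n k ε := by
    linarith [sq_nonneg (2 * annA n k ε * tp + annB n k ε), hidenp, h4p]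
  refine ⟨hD, ?_⟩
  set D : ℝ := annB n k ε ^ 2 - 4 * annA n k ε * annC n k ε with hDdef
  have hsqrt_pos : 0 < Real.sqrt D := Real.sqrt_pos.mpr hD
  -- upper bound : sigMinus < tp
  have hup : sigMinus n k ε < tp := by
    rw [sigMinus, div_lt_iff₀ (by linarith : 0 < 2 * annA n k ε)]
    rw [← hDdef]
    have hsq : (-(annB n k ε) - 2 * annA n k ε * tp) ^ 2 < D := by
      have e : (-(annB n k ε) - 2 * annA n k ε * tp) ^ 2
          = (2 * annA n k ε * tp + annB n k ε) ^ 2 := by ring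
      rw [e]; linarith [hidenp, h4p]
    have h1 : -(annB n k ε) - 2 * annA n k ε * tp < Real.sqrt D :=
      Real.lt_sqrt_of_sq_lt hsq
    have e2 : tp * (2 * annA n k ε) = 2 * annA n k ε * tp := by ring
    linarith [h1, e2]
  -- lower bound : tm < sigMinus
  have hidenm : (2 * annA n k ε * tm + annB n k ε) ^ 2 - D
      = 4 * annA n k ε * (annA n k ε * tm ^ 2 + annB n k ε * tm + annC n k ε) := by
    rw [hDdef]; ring
  have h4m : 0 < 4 * annA n k ε * (annA n k ε * tm ^ 2 + annB n k ε * tm + annC n k ε) := by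
    have h := mul_pos hA0 hfm_pos
    linarith [h]
  have hlo : tm < sigMinus n k ε := by
    rw [sigMinus, lt_div_iff₀ (by linarith : 0 < 2 * annA n k ε)]
    rw [← hDdef]
    have h1 : Real.sqrt D < -(annB n k ε) - 2 * annA n k ε * tm := by
      rw [Real.sqrt_lt' (by linarith)]
      have e : (-(annB n k ε) - 2 * annA n k ε * tm) ^ 2
          = (2 * annA n k ε * tm + annB n k ε) ^ 2 := by ring
      rw [e]; linarith [hidenm, h4m]
    have e2 : tm * (2 * annA n k ε) = 2 * annA n k ε * tm := by ring
    linarith [h1, e2]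
  -- conclude
  rw [hE1', hc'']
  rw [abs_le]
  have ecomm : E * ε = ε * E := mul_comm E ε
  constructor
  · rw [htmdef] at hlo; linarith [hlo, ecomm]
  · rw [htpdef] at hup; linarith [hup, ecomm]
end

section
/- Let n ≥ 3 and k ≥ 1 be integers and define, for 0 < ε < 1, A(ε) = ε − ε^{2k+n−1}, B(ε) = −((k+n−2)ε^{2k+n−1} + kε^{2k+n−2} + kε + (k+n−2)), C(ε) = k(k+n−2)(1 − ε^{2k+n−2}), and σ₋(ε) := (−B(ε) − √(B(ε)² − 4A(ε)C(ε)))/(2A(ε)). Then there exists ε₀ ∈ (0,1) such that for all ε ∈ (0, ε₀), σ₋(ε) · (1 + ε^{n−1})^{1/(n−1)} > k. -/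
set_option maxHeartbeats 1600000 in
/-- For small `ε` the boundary-volume-normalized `k`-th Steklov eigenvalue of the annulus
exceeds that of the unit ball: `σ₋(ε) · (1 + ε^{n-1})^{1/(n-1)} > k`. -/
theorem stmt7 {n k : ℕ} (hn : 3 ≤ n) (hk : 1 ≤ k) :
    ∃ ε₀ ∈ Set.Ioo (0 : ℝ) 1, ∀ ε ∈ Set.Ioo (0 : ℝ) ε₀,
      (k : ℝ) < sigMinus n k ε * (1 + ε ^ (n - 1)) ^ ((1 : ℝ) / ((n : ℝ) - 1)) := by
  have hK : (1:ℝ) ≤ (k:ℝ) := by exact_mod_cast hk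
  have hN : (3:ℝ) ≤ (n:ℝ) := by exact_mod_cast hn
  set K : ℝ := (k : ℝ) with hKdef
  set N : ℝ := (n : ℝ) with hNdef
  set c : ℝ := 2*(2*K + N - 2) with hc
  have hc6 : 6 ≤ c := by rw [hc]; linarith
  set Dd : ℝ := 4*(N-1)*(2*K+N-2) with hDd
  have hD24 : 24 ≤ Dd := by rw [hDd]; nlinarith
  have hDc : Dd = 2*(N-1)*c := by rw [hDd, hc]; ring
  have hD0 : 0 < Dd := by linarith
  clear_value Dd c K N
  refine ⟨1/Dd, ⟨by positivity, by rw [div_lt_one hD0]; linarith⟩, ?_⟩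
  rintro ε ⟨he0, heD⟩
  have hDe : Dd * ε < 1 := by
    have := (lt_div_iff₀ hD0).mp heD
    linarith
  have he1 : ε < 1 := by nlinarith
  -- exponents
  have hm1 : 2 * k + n - 1 = (2*k+n-2) + 1 := by omega
  set m : ℕ := 2*k+n-2 with hmdef
  set u : ℝ := ε ^ m with hu
  have hu0 : 0 ≤ u := by positivity
  have hu1 : u ≤ ε := by
    have : ε ^ m ≤ ε ^ 1 := pow_le_pow_of_le_one he0.le he1.le (by omega)
    simpa [hu] using this
  -- u ≤ ε^(n-1) * ε
  have hm2 : m = (n-1) + (2*k-1) := by omega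
  have huv : u ≤ ε ^ (n-1) * ε := by
    rw [hu, hm2, pow_add]
    refine mul_le_mul_of_nonneg_left ?_ (by positivity)
    have : ε ^ (2*k-1) ≤ ε ^ 1 := pow_le_pow_of_le_one he0.le he1.le (by omega)
    simpa using this
  set A := annA n k ε with hAdef
  set B := annB n k ε with hBdef
  set C := annC n k ε with hCdef
  have hAeq : A = ε - u*ε := by rw [hAdef, annA, hm1, pow_succ]
  have hBeq : B = -((K+N-2)*(u*ε) + K*u + K*ε + (K+N-2)) := by
    rw [hBdef, annB, hm1, pow_succ, ← hKdef, ← hNdef, ← hmdef, ← hu]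
  have hCeq : C = K*(K+N-2)*(1-u) := by rw [hCdef, annC, ← hKdef, ← hNdef, ← hmdef, ← hu]
  have hσdef : sigMinus n k ε = (-B - Real.sqrt (B^2 - 4*A*C)) / (2*A) := rfl
  clear_value A B C
  clear hAdef hBdef hCdef
  set v : ℝ := ε ^ (n-1) with hv
  have hv0 : 0 < v := by positivity
  have hv1 : v < 1 := by
    rw [hv]; exact pow_lt_one₀ he0.le he1 (by omega)
  clear_value u v
  clear hu hm2 hm1 hmdef m
  have hA : 0 < A := by rw [hAeq]; nlinarith
  obtain ⟨t, htdef⟩ : ∃ t, t = K * (1 - c*u) := ⟨_, rfl⟩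
  have hcu : c * u ≤ 1/4 := by
    have h1 : c*u ≤ c*ε := mul_le_mul_of_nonneg_left hu1 (by linarith)
    have h4c : (0:ℝ) ≤ Dd - 4*c := by
      nlinarith [mul_nonneg (by linarith : (0:ℝ) ≤ 2*c) (by linarith : (0:ℝ) ≤ N-3)]
    have h2 : 0 ≤ (Dd - 4*c)*ε := mul_nonneg h4c he0.le
    have h3 : 4*(c*ε) ≤ Dd*ε := by nlinarith [h2]
    linarith
  have ht0 : 0 < t := by rw [htdef]; exact mul_pos (by linarith) (by linarith)
  have hQ : 0 ≤ A*t^2 + B*t + C := by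
    have key : A*t^2 + B*t + C =
        K*u*((2*K+N-2)*(2*K+2*N-5-(2*K+1)*ε) + c*K*u + c*(3*K+N-2)*(u*ε))
          + ε*(1-u)*(K^2*c^2*u^2) := by
      rw [hAeq, hBeq, hCeq, htdef, hc]; ring
    have hε1 : (0:ℝ) ≤ 2*K+2*N-5-(2*K+1)*ε := by
      nlinarith [mul_nonneg (by linarith : (0:ℝ) ≤ 2*K+1) (by linarith : (0:ℝ) ≤ 1-ε)]
    have h1 : 0 ≤ K*u*((2*K+N-2)*(2*K+2*N-5-(2*K+1)*ε) + c*K*u + c*(3*K+N-2)*(u*ε)) := by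
      have ha : 0 ≤ (2*K+N-2)*(2*K+2*N-5-(2*K+1)*ε) := mul_nonneg (by linarith) hε1
      have hb : 0 ≤ c*K*u := mul_nonneg (mul_nonneg (by linarith) (by linarith)) hu0
      have hcc : 0 ≤ c*(3*K+N-2)*(u*ε) :=
        mul_nonneg (mul_nonneg (by linarith) (by linarith)) (mul_nonneg hu0 he0.le)
      exact mul_nonneg (mul_nonneg (by linarith) hu0) (by linarith)
    have h2 : 0 ≤ ε*(1-u)*(K^2*c^2*u^2) :=
      mul_nonneg (mul_nonneg he0.le (by linarith)) (by positivity)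
    linarith
  -- vertex condition
  have hvert : 0 ≤ -B - 2*A*t := by
    have h2 : 0 ≤ 2*A*(K-t) := by
      have : 0 ≤ K - t := by
        rw [htdef]
        nlinarith [mul_nonneg (mul_nonneg (by linarith : (0:ℝ) ≤ K) (by linarith : (0:ℝ) ≤ c)) hu0]
      nlinarith
    rw [hAeq, hBeq]
    rw [hAeq] at h2
    nlinarith [mul_nonneg (mul_nonneg hu0 he0.le) (by linarith : (0:ℝ) ≤ 3*K+N-2),
      mul_nonneg hu0 (by linarith : (0:ℝ) ≤ K)]
  -- σ ≥ t
  have hsq : B^2 - 4*A*C ≤ (-B - 2*A*t)^2 := by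
    nlinarith [mul_nonneg hA.le hQ]
  have hsqrt : Real.sqrt (B^2 - 4*A*C) ≤ -B - 2*A*t :=
    (Real.sqrt_le_sqrt hsq).trans_eq (Real.sqrt_sq hvert)
  have hσt : t ≤ sigMinus n k ε := by
    rw [hσdef, le_div_iff₀ (by linarith : (0:ℝ) < 2*A)]
    linarith
  set σ := sigMinus n k ε with hσ
  clear_value σ
  have hσ0 : 0 < σ := lt_of_lt_of_le ht0 hσt
  -- power argument
  have hp : ((n-1 : ℕ) : ℝ) = N - 1 := by
    rw [hNdef]; push_cast [Nat.cast_sub (by omega : 1 ≤ n)]; ring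
  have hbern : 1 - ((n-1:ℕ):ℝ)*(c*u) ≤ (1 - c*u)^(n-1) := by
    have := one_add_mul_le_pow (a := -(c*u)) (by linarith) (n-1)
    calc 1 - ((n-1:ℕ):ℝ)*(c*u) = 1 + ((n-1:ℕ):ℝ)*(-(c*u)) := by ring
    _ ≤ (1 + -(c*u))^(n-1) := this
    _ = (1 - c*u)^(n-1) := by ring_nf
  have hcu0 : 0 ≤ c*u := mul_nonneg (by linarith) hu0
  -- key: (N-1)*(c*u)*(1+v) < v
  have hkey : (N-1)*(c*u)*(1+v) < v := by
    have h1 : (N-1)*(c*u)*(1+v) ≤ (N-1)*c*(v*ε)*2 := by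
      have e1 : (N-1)*(c*u)*(1+v) = ((N-1)*c)*(u*(1+v)) := by ring
      have e2 : (N-1)*c*(v*ε)*2 = ((N-1)*c)*((v*ε)*2) := by ring
      rw [e1, e2]
      refine mul_le_mul_of_nonneg_left ?_ (by nlinarith)
      nlinarith [mul_le_mul_of_nonneg_right huv (by linarith : (0:ℝ) ≤ 1+v),
        mul_nonneg (mul_nonneg hv0.le he0.le) (by linarith : (0:ℝ) ≤ 1-v)]
    have h2 : (N-1)*c*(v*ε)*2 = (Dd*ε)*v := by rw [hDc]; ring
    have h3 : (Dd*ε)*v < 1*v := by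
      exact mul_lt_mul_of_pos_right hDe hv0
    linarith
  -- main: K^(n-1) < t^(n-1) * (1+v)
  have hmain : K^(n-1) < t^(n-1) * (1+v) := by
    have hKp : 0 < K^(n-1) := by positivity
    have ht' : t^(n-1) = K^(n-1) * (1 - c*u)^(n-1) := by rw [htdef, mul_pow]
    have h1 : K^(n-1) * (1 - ((n-1:ℕ):ℝ)*(c*u)) * (1+v) ≤ t^(n-1) * (1+v) := by
      rw [ht']
      have := mul_le_mul_of_nonneg_left hbern hKp.le
      nlinarith
    have h2 : K^(n-1) < K^(n-1) * (1 - ((n-1:ℕ):ℝ)*(c*u)) * (1+v) := by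
      rw [hp]
      have : 1 < (1 - (N-1)*(c*u)) * (1+v) := by nlinarith
      nlinarith
    linarith
  -- conclude via (n-1)-th powers
  have hrp : ((1 + v) ^ ((1 : ℝ) / (N - 1)))^(n-1) = 1 + v := by
    have ha0 : (0:ℝ) ≤ 1 + v := by linarith
    rw [← Real.rpow_natCast ((1+v) ^ ((1:ℝ)/(N-1))) (n-1), ← Real.rpow_mul ha0, hp]
    rw [one_div_mul_cancel (by linarith : N - 1 ≠ 0), Real.rpow_one]
  have hP0 : 0 ≤ (1 + v) ^ ((1 : ℝ) / (N - 1)) := Real.rpow_nonneg (by linarith) _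
  have hfinal : K^(n-1) < (σ * (1 + v) ^ ((1 : ℝ) / (N - 1)))^(n-1) := by
    rw [mul_pow, hrp]
    have h1 : t^(n-1) ≤ σ^(n-1) := pow_le_pow_left₀ ht0.le hσt (n-1)
    have h2 : t^(n-1)*(1+v) ≤ σ^(n-1)*(1+v) := mul_le_mul_of_nonneg_right h1 (by linarith)
    linarith
  have := lt_of_pow_lt_pow_left₀ (n-1) (mul_nonneg hσ0.le hP0) hfinal
  exact this
end

section
/- Let n ≥ 3 and let k ≥ 0 be an integer. If P : ℝⁿ → ℝ is a polynomial function that is homogeneous of degree k and harmonic on ℝⁿ (the sum of its second partial derivatives in the standard coordinate directions vanishes identically), then the function u(x) := ‖x‖^{2−n−2k} P(x) is harmonic on ℝⁿ \ {0}. -/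
/-- The Laplacian of `u : ℝⁿ → ℝ` at `x`, as the sum of second partial derivatives in the
standard coordinate directions. -/
noncomputable def lap {n : ℕ} (u : EuclideanSpace ℝ (Fin n) → ℝ)
    (x : EuclideanSpace ℝ (Fin n)) : ℝ :=
  ∑ j : Fin n,
    fderiv ℝ (fun y => fderiv ℝ u y (EuclideanSpace.single j (1 : ℝ))) x
      (EuclideanSpace.single j (1 : ℝ))

/-- `u` is harmonic on `U`: twice differentiable there and its Laplacian vanishes. -/
def HarmonicOnSet {n : ℕ} (u : EuclideanSpace ℝ (Fin n) → ℝ)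
    (U : Set (EuclideanSpace ℝ (Fin n))) : Prop :=
  ∀ x ∈ U, DifferentiableAt ℝ u x ∧ DifferentiableAt ℝ (fderiv ℝ u) x ∧ lap u x = 0

open MvPolynomial Filter

variable {n : ℕ}

noncomputable def pev (q : MvPolynomial (Fin n) ℝ) (x : EuclideanSpace ℝ (Fin n)) : ℝ :=
  MvPolynomial.eval (fun i => x i) q

noncomputable def pgrad (q : MvPolynomial (Fin n) ℝ) (x : EuclideanSpace ℝ (Fin n)) :
    EuclideanSpace ℝ (Fin n) →L[ℝ] ℝ :=
  ∑ j, pev (pderiv j q) x • EuclideanSpace.proj j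

lemma pgrad_apply (q : MvPolynomial (Fin n) ℝ) (x v : EuclideanSpace ℝ (Fin n)) :
    pgrad q x v = ∑ j, pev (pderiv j q) x * v j := by
  simp [pgrad]

lemma pgrad_single (q : MvPolynomial (Fin n) ℝ) (x : EuclideanSpace ℝ (Fin n)) (j : Fin n) :
    pgrad q x (EuclideanSpace.single j 1) = pev (pderiv j q) x := by
  simp [pgrad_apply, EuclideanSpace.single_apply]

lemma pev_hasFDerivAt (q : MvPolynomial (Fin n) ℝ) (x : EuclideanSpace ℝ (Fin n)) :
    HasFDerivAt (pev q) (pgrad q x) x := by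
  induction q using MvPolynomial.induction_on with
  | C a =>
      have h1 : pgrad (C a : MvPolynomial (Fin n) ℝ) x = 0 := by simp [pgrad, pev]
      have h2 : pev (C a : MvPolynomial (Fin n) ℝ) = fun _ => a := by funext y; simp [pev]
      rw [h1, h2]
      exact hasFDerivAt_const _ _
  | add p q hp hq =>
      have h1 : pgrad (p + q) x = pgrad p x + pgrad q x := by
        simp [pgrad, pev, add_smul, Finset.sum_add_distrib]
      have h2 : pev (p + q) = fun y => pev p y + pev q y := by funext y; simp [pev]
      rw [h1, h2]
      exact hp.add hq
  | mul_X p i hp =>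
      have h2 : HasFDerivAt (fun y : EuclideanSpace ℝ (Fin n) => y i)
          (EuclideanSpace.proj (𝕜 := ℝ) (ι := Fin n) i) x :=
        (EuclideanSpace.proj (𝕜 := ℝ) (ι := Fin n) i).hasFDerivAt
      have h3 := hp.mul h2
      have key : pgrad (p * X i) x
          = pev p x • EuclideanSpace.proj (𝕜 := ℝ) (ι := Fin n) i + x i • pgrad p x := by
        ext v
        simp only [pgrad, pev, ContinuousLinearMap.add_apply, ContinuousLinearMap.smul_apply,
          ContinuousLinearMap.sum_apply, pderiv_mul, map_add, map_mul, eval_X,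
          PiLp.proj_apply, smul_eq_mul, add_mul]
        rw [Finset.sum_add_distrib]
        have e1 : ∑ j, MvPolynomial.eval (fun i => x i) p *
            MvPolynomial.eval (fun i => x i) (pderiv j (X i)) * v j
            = MvPolynomial.eval (fun i => x i) p * v i := by
          rw [Finset.sum_eq_single i]
          · simp
          · intro b _ hb
            rw [pderiv_X_of_ne (Ne.symm hb)]
            simp
          · simp
        rw [e1]
        rw [Finset.mul_sum]
        conv_rhs => rw [add_comm]
        exact congrArg₂ (· + ·) (Finset.sum_congr rfl fun j _ => by ring) rfl
      have h4 : pev (p * X i) = fun y => pev p y * y i := by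
        funext y; simp [pev]
      rw [h4, key]
      exact h3

noncomputable def Qp (n : ℕ) : MvPolynomial (Fin n) ℝ := ∑ i, X i ^ 2

lemma pev_Qp (x : EuclideanSpace ℝ (Fin n)) : pev (Qp n) x = ∑ i, x i ^ 2 := by
  simp [pev, Qp]

lemma pev_Qp_eq_norm (x : EuclideanSpace ℝ (Fin n)) : pev (Qp n) x = ‖x‖ ^ 2 := by
  rw [pev_Qp, EuclideanSpace.norm_eq, Real.sq_sqrt]
  · exact Finset.sum_congr rfl fun i _ => by rw [Real.norm_eq_abs, sq_abs]
  · positivity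

lemma pev_Qp_pos {x : EuclideanSpace ℝ (Fin n)} (hx : x ≠ 0) : 0 < pev (Qp n) x := by
  rw [pev_Qp_eq_norm]
  exact pow_pos (norm_pos_iff.2 hx) 2

lemma pev_pderiv_Qp (j : Fin n) (x : EuclideanSpace ℝ (Fin n)) :
    pev (pderiv j (Qp n)) x = 2 * x j := by
  have : pderiv j (Qp n) = ∑ i, pderiv j (X i ^ 2 : MvPolynomial (Fin n) ℝ) := by
    simp [Qp]
  rw [this]
  have h1 : ∀ i : Fin n, pderiv j (X i ^ 2 : MvPolynomial (Fin n) ℝ)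
      = (2 : MvPolynomial (Fin n) ℝ) * X i * pderiv j (X i) := by
    intro i
    rw [pderiv_pow]
    push_cast
    ring
  simp only [h1]
  rw [Finset.sum_eq_single j]
  · simp [pev]
  · intro b _ hb
    rw [pderiv_X_of_ne hb]
    simp
  · simp

noncomputable def Fc (c : ℝ) (q : MvPolynomial (Fin n) ℝ) (x : EuclideanSpace ℝ (Fin n)) : ℝ :=
  pev (Qp n) x ^ c * pev q x

noncomputable def Dop (c : ℝ) (j : Fin n) (q : MvPolynomial (Fin n) ℝ) : MvPolynomial (Fin n) ℝ :=
  C (2 * c) * X j * q + Qp n * pderiv j q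

lemma pev_Dop (c : ℝ) (j : Fin n) (q : MvPolynomial (Fin n) ℝ) (x : EuclideanSpace ℝ (Fin n)) :
    pev (Dop c j q) x = 2 * c * x j * pev q x + pev (Qp n) x * pev (pderiv j q) x := by
  simp [Dop, pev]

lemma Fc_hasFDerivAt (c : ℝ) (q : MvPolynomial (Fin n) ℝ) {x : EuclideanSpace ℝ (Fin n)}
    (hx : x ≠ 0) :
    HasFDerivAt (Fc c q)
      (∑ j, Fc (c - 1) (Dop c j q) x • EuclideanSpace.proj (𝕜 := ℝ) (ι := Fin n) j) x := by
  have hQ := pev_Qp_pos hx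
  have h1 : HasDerivAt (fun t : ℝ => t ^ c) (c * pev (Qp n) x ^ (c - 1)) (pev (Qp n) x) :=
    Real.hasDerivAt_rpow_const (Or.inl hQ.ne')
  have h2 : HasFDerivAt (fun y => pev (Qp n) y ^ c)
      ((c * pev (Qp n) x ^ (c - 1)) • pgrad (Qp n) x) x :=
    h1.comp_hasFDerivAt x (pev_hasFDerivAt _ x)
  have h3 := h2.mul (pev_hasFDerivAt q x)
  have key : (∑ j, Fc (c - 1) (Dop c j q) x • EuclideanSpace.proj (𝕜 := ℝ) (ι := Fin n) j)
      = pev (Qp n) x ^ c • pgrad q x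
        + pev q x • (c * pev (Qp n) x ^ (c - 1)) • pgrad (Qp n) x := by
    ext v
    simp only [ContinuousLinearMap.add_apply, ContinuousLinearMap.smul_apply,
      ContinuousLinearMap.sum_apply, PiLp.proj_apply, smul_eq_mul, pgrad_apply]
    simp only [Finset.mul_sum]
    rw [← Finset.sum_add_distrib]
    refine Finset.sum_congr rfl fun j _ => ?_
    rw [Fc, pev_Dop, pev_pderiv_Qp]
    have hc : pev (Qp n) x ^ c = pev (Qp n) x ^ (c - 1) * pev (Qp n) x := by
      rw [← Real.rpow_add_one hQ.ne' (c - 1)]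
      norm_num
    rw [hc]
    ring
  rw [key]
  exact h3

lemma fderiv_Fc_single (c : ℝ) (q : MvPolynomial (Fin n) ℝ) {x : EuclideanSpace ℝ (Fin n)}
    (hx : x ≠ 0) (j : Fin n) :
    fderiv ℝ (Fc c q) x (EuclideanSpace.single j 1) = Fc (c - 1) (Dop c j q) x := by
  rw [(Fc_hasFDerivAt c q hx).fderiv]
  simp only [ContinuousLinearMap.sum_apply, ContinuousLinearMap.smul_apply, PiLp.proj_apply,
    EuclideanSpace.single_apply, smul_eq_mul]
  rw [Finset.sum_eq_single j]
  · simp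
  · intro b _ hb
    simp [hb]
  · simp

lemma lap_Fc (c : ℝ) (q : MvPolynomial (Fin n) ℝ) {x : EuclideanSpace ℝ (Fin n)} (hx : x ≠ 0) :
    lap (Fc c q) x = ∑ j, Fc (c - 1 - 1) (Dop (c - 1) j (Dop c j q)) x := by
  unfold lap
  refine Finset.sum_congr rfl fun j _ => ?_
  have hev : (fun y => fderiv ℝ (Fc c q) y (EuclideanSpace.single j 1))
      =ᶠ[nhds x] Fc (c - 1) (Dop c j q) := by
    filter_upwards [IsOpen.mem_nhds isOpen_compl_singleton hx] with y hy
    exact fderiv_Fc_single c q hy j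
  rw [hev.fderiv_eq]
  exact fderiv_Fc_single (c - 1) (Dop c j q) hx j

lemma euler_poly {p : MvPolynomial (Fin n) ℝ} {k : ℕ} (h : p.IsHomogeneous k) :
    ∑ j, X j * pderiv j p = C (k : ℝ) * p := by
  conv_lhs => rw [p.as_sum]
  conv_rhs => rw [p.as_sum]
  simp only [map_sum, Finset.mul_sum]
  rw [Finset.sum_comm]
  refine Finset.sum_congr rfl fun d hd => ?_
  have ha : coeff d p ≠ 0 := mem_support_iff.mp hd
  have hdeg : ∑ j, d j = k := by
    have h2 := h ha
    rw [Finsupp.weight_apply] at h2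
    simp only [Pi.one_apply, smul_eq_mul, mul_one] at h2
    rw [← h2, Finsupp.sum]
    exact (Finset.sum_subset (Finset.subset_univ d.support)
      (fun i _ hi => Finsupp.notMem_support_iff.mp hi)).symm
  have step : ∀ j : Fin n, X j * pderiv j (monomial d (coeff d p))
      = monomial d (coeff d p * d j) := by
    intro j
    rw [pderiv_monomial]
    by_cases hj : d j = 0
    · simp [hj]
    · rw [X, monomial_mul, one_mul]
      congr 1
      rw [add_tsub_cancel_of_le]
      exact Finsupp.single_le_iff.mpr (Nat.one_le_iff_ne_zero.2 hj)
  simp only [step]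
  rw [← map_sum (monomial d), ← Finset.mul_sum]
  rw [C_mul_monomial]
  rw [← Nat.cast_sum, hdeg, mul_comm]

lemma euler_eval {p : MvPolynomial (Fin n) ℝ} {k : ℕ} (h : p.IsHomogeneous k)
    (x : EuclideanSpace ℝ (Fin n)) :
    ∑ j, x j * pev (pderiv j p) x = k * pev p x := by
  have h1 := congrArg (MvPolynomial.eval (fun i : Fin n => x i)) (euler_poly h)
  simpa [pev, Finset.mul_sum] using h1

lemma lap_pev (q : MvPolynomial (Fin n) ℝ) (x : EuclideanSpace ℝ (Fin n)) :
    lap (pev q) x = ∑ j, pev (pderiv j (pderiv j q)) x := by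
  unfold lap
  refine Finset.sum_congr rfl fun j _ => ?_
  have h1 : (fun y => fderiv ℝ (pev q) y (EuclideanSpace.single j 1)) = pev (pderiv j q) := by
    funext y
    rw [(pev_hasFDerivAt q y).fderiv, pgrad_single]
  rw [h1, (pev_hasFDerivAt (pderiv j q) x).fderiv, pgrad_single]

lemma pev_pderiv_Dop (c : ℝ) (j : Fin n) (q : MvPolynomial (Fin n) ℝ)
    (x : EuclideanSpace ℝ (Fin n)) :
    pev (pderiv j (Dop c j q)) x
      = 2 * c * pev q x + 2 * c * x j * pev (pderiv j q) x
        + 2 * x j * pev (pderiv j q) x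
        + pev (Qp n) x * pev (pderiv j (pderiv j q)) x := by
  have h1 : pderiv j (Dop c j q) = C (2 * c) * q + C (2 * c) * X j * pderiv j q
      + pderiv j (Qp n) * pderiv j q + Qp n * pderiv j (pderiv j q) := by
    simp only [Dop, map_add, pderiv_mul, pderiv_C, pderiv_X_self]
    ring
  rw [h1]
  have h2 := pev_pderiv_Qp j x
  simp only [pev, map_add, map_mul, eval_C, eval_X] at h2 ⊢
  rw [h2]

lemma sum_Dop_eval (c : ℝ) {p : MvPolynomial (Fin n) ℝ} {k : ℕ} (hhom : p.IsHomogeneous k)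
    (x : EuclideanSpace ℝ (Fin n)) :
    ∑ j, pev (Dop (c - 1) j (Dop c j p)) x
      = (4 * c * (c - 1) + 4 * c * k + 2 * c * n) * pev (Qp n) x * pev p x
        + pev (Qp n) x ^ 2 * ∑ j, pev (pderiv j (pderiv j p)) x := by
  have expand : ∀ j : Fin n, pev (Dop (c - 1) j (Dop c j p)) x
      = 4 * c * (c - 1) * pev p x * (x j) ^ 2
        + (4 * c * pev (Qp n) x) * (x j * pev (pderiv j p) x)
        + 2 * c * pev (Qp n) x * pev p x
        + pev (Qp n) x ^ 2 * pev (pderiv j (pderiv j p)) x := by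
    intro j
    rw [pev_Dop, pev_Dop, pev_pderiv_Dop]
    ring
  simp only [expand]
  rw [Finset.sum_add_distrib, Finset.sum_add_distrib, Finset.sum_add_distrib,
    ← Finset.mul_sum, ← Finset.mul_sum, ← Finset.mul_sum, euler_eval hhom,
    Finset.sum_const, Finset.card_univ, Fintype.card_fin]
  have hS : ∑ j, (x j) ^ 2 = pev (Qp n) x := (pev_Qp x).symm
  rw [hS, ← Finset.mul_sum]
  ring


/-- If `P` is a harmonic polynomial, homogeneous of degree `k`, then the Kelvin-type
transform `x ↦ ‖x‖^{2-n-2k} P(x)` is harmonic on `ℝⁿ \ {0}`. -/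
theorem stmt11 {n : ℕ} (hn : 3 ≤ n) (k : ℕ) (P : EuclideanSpace ℝ (Fin n) → ℝ)
    (p : MvPolynomial (Fin n) ℝ) (hPp : ∀ x, P x = MvPolynomial.eval (fun i => x i) p)
    (hhom : p.IsHomogeneous k) (hharm : ∀ x, lap P x = 0) :
    HarmonicOnSet (fun x => ‖x‖ ^ ((2 : ℝ) - n - 2 * k) * P x) {0}ᶜ := by
  set c : ℝ := ((2 : ℝ) - n - 2 * k) / 2 with hc
  have hu : (fun x : EuclideanSpace ℝ (Fin n) => ‖x‖ ^ ((2 : ℝ) - n - 2 * k) * P x) = Fc c p := by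
    funext x
    rw [hPp x]
    unfold Fc
    rw [pev_Qp_eq_norm]
    congr 1
    rw [← Real.rpow_natCast ‖x‖ 2, ← Real.rpow_mul (norm_nonneg x)]
    congr 1
    push_cast
    rw [hc]
    ring
  rw [hu]
  intro x hx
  have hx0 : x ≠ 0 := Set.mem_compl_singleton_iff.mp hx
  have hQ := pev_Qp_pos hx0
  refine ⟨(Fc_hasFDerivAt c p hx0).differentiableAt, ?_, ?_⟩
  · have hdiff : DifferentiableAt ℝ
        (fun y => ∑ j, Fc (c - 1) (Dop c j p) y • EuclideanSpace.proj (𝕜 := ℝ) (ι := Fin n) j) x := by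
      apply DifferentiableAt.fun_sum
      intro j _
      exact ((Fc_hasFDerivAt (c - 1) (Dop c j p) hx0).differentiableAt).smul_const _
    refine hdiff.congr_of_eventuallyEq ?_
    filter_upwards [isOpen_compl_singleton.mem_nhds hx0] with y hy
    exact (Fc_hasFDerivAt c p (Set.mem_compl_singleton_iff.mp hy)).fderiv
  · rw [lap_Fc c p hx0]
    have hP : P = pev p := funext hPp
    have hlapP : ∑ j, pev (pderiv j (pderiv j p)) x = 0 := by
      rw [← lap_pev p x, ← hP]
      exact hharm x
    have hsum := sum_Dop_eval c hhom x
    have hFc : ∀ j : Fin n, Fc (c - 1 - 1) (Dop (c - 1) j (Dop c j p)) x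
        = pev (Qp n) x ^ (c - 1 - 1) * pev (Dop (c - 1) j (Dop c j p)) x := fun j => rfl
    simp only [hFc]
    rw [← Finset.mul_sum, hsum, hlapP]
    have hcoef : 4 * c * (c - 1) + 4 * c * (k : ℝ) + 2 * c * (n : ℝ) = 0 := by
      rw [hc]; ring
    rw [hcoef]
    ring
end
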